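/- Let φ ∈ ℝ[z₁,z₂], let J ≥ 1, K ≥ 0, A ≥ 2 be integers, let c ≠ 0, and suppose that φ − z₁^J − c z₁^K z₂^A is divisible by z₂^{A+1}. If the operator T = T_{[−1,1]²} is of restricted weak type (p,q) for some 1 ≤ p, q ≤ ∞, then 1/q ≥ ((A+1)/(2A+1))·(1/p) − 1/(2A+1), and (by duality) also 1/q ≥ ((2A+1)/(A+1))·(1/p) − 1. -/

import Mathlib

open MeasureTheory MvPolynomial
open scoped ENNReal

/-- The averaging operator `T_R f(x) = ∫_R f(x₁ − t₁, x₂ − t₂, x₃ − φ(t)) dt`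
acting on nonnegative measurable functions on ℝ³. -/
noncomputable def avgOp (φ : ℝ × ℝ → ℝ) (R : Set (ℝ × ℝ))
    (f : ℝ × ℝ × ℝ → ℝ≥0∞) (x : ℝ × ℝ × ℝ) : ℝ≥0∞ :=
  ∫⁻ t in R, f (x.1 - t.1, x.2.1 - t.2, x.2.2 - φ t)

/-- The bilinear pairing `⟨T_R χ_E, χ_F⟩`. -/
noncomputable def pairing (φ : ℝ × ℝ → ℝ) (R : Set (ℝ × ℝ))
    (E F : Set (ℝ × ℝ × ℝ)) : ℝ≥0∞ :=
  ∫⁻ x, avgOp φ R (E.indicator 1) x * F.indicator 1 x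

/-- `T_R` is of restricted weak type `(p,q)`, written in terms of the reciprocals
`pinv = 1/p`, `qinv = 1/q` (so `1 ≤ p, q ≤ ∞` corresponds to `pinv, qinv ∈ [0,1]`):
there is `C < ∞` with `⟨T_R χ_E, χ_F⟩ ≤ C |E|^{1/p} |F|^{1−1/q}` for all measurable
`E, F ⊆ ℝ³` of finite measure. -/
def RWT (φ : ℝ × ℝ → ℝ) (R : Set (ℝ × ℝ)) (pinv qinv : ℝ) : Prop :=
  ∃ C : ℝ, 0 ≤ C ∧ ∀ E F : Set (ℝ × ℝ × ℝ), MeasurableSet E → MeasurableSet F →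
    volume E < ⊤ → volume F < ⊤ →
    pairing φ R E F ≤ ENNReal.ofReal C * volume E ^ pinv * volume F ^ (1 - qinv)

/-- The unit square `[−1,1]²` in ℝ². -/
def unitSquare : Set (ℝ × ℝ) := Set.Icc ((-1, -1) : ℝ × ℝ) (1, 1)

/-! Along `t₂ = 0` the graph of `φ` agrees with the cylinder over the curve `x₃ = t₁^J` up to
`O(|t₂|^A)`, so for `t₂ ≤ η δ` the points `x - (t, φ t)` stay in a `δ^A`-neighbourhood of a
translate of that curve. Testing the restricted weak type inequality on a tube of cross-section
`δ × δ^A` around such a curve (volume `≈ δ^{A+1}`) against a box `δ^A × δ × δ^A` (volume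
`≈ δ^{2A+1}`), in both orders, the pairing is `≳ δ^{2A+2}`; letting `δ → 0` gives
`(A+1)/p + (2A+1)(1-1/q) ≤ 2A+2` and `(2A+1)/p + (A+1)(1-1/q) ≤ 2A+2`. -/

open Filter Topology

def shear (g : ℝ → ℝ) (x : ℝ × ℝ × ℝ) : ℝ × ℝ × ℝ := (x.1, x.2.1, x.2.2 - g x.1)

lemma measurePreserving_shear {g : ℝ → ℝ} (hg : Measurable g) :
    MeasurePreserving (shear g) := by
  have := (MeasurePreserving.id (volume : Measure ℝ)).skew_product
    (μc := (volume : Measure (ℝ × ℝ))) (g := fun u y => y - (0, g u)) (by fun_prop)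
    (.of_forall fun u => (measurePreserving_sub_right volume ((0 : ℝ), g u)).map_eq)
  convert this using 1
  · ext x <;> simp [shear]
  all_goals exact Measure.volume_eq_prod _ _

lemma volume_Icc_prod_Icc_prod_Icc {a₁ b₁ a₂ b₂ : ℝ} (a₃ b₃ : ℝ) (h₁ : a₁ ≤ b₁) (h₂ : a₂ ≤ b₂) :
    volume (Set.Icc a₁ b₁ ×ˢ Set.Icc a₂ b₂ ×ˢ Set.Icc a₃ b₃) =
      ENNReal.ofReal ((b₁ - a₁) * (b₂ - a₂) * (b₃ - a₃)) := by
  rw [Measure.volume_eq_prod, Measure.prod_prod, Measure.volume_eq_prod, Measure.prod_prod,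
    Real.volume_Icc, Real.volume_Icc, Real.volume_Icc, ← mul_assoc,
    ← ENNReal.ofReal_mul (sub_nonneg.2 h₁), ← ENNReal.ofReal_mul (by nlinarith)]

lemma volume_Icc_prod_real (a b : ℝ × ℝ) :
    volume (Set.Icc a b) = ENNReal.ofReal (b.1 - a.1) * ENNReal.ofReal (b.2 - a.2) := by
  rw [← Set.Icc_prod_Icc, Measure.volume_eq_prod, Measure.prod_prod, Real.volume_Icc,
    Real.volume_Icc]

lemma measurableSet_Icc_prod_Icc_prod_Icc (a₁ b₁ a₂ b₂ a₃ b₃ : ℝ) :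
    MeasurableSet (Set.Icc a₁ b₁ ×ˢ Set.Icc a₂ b₂ ×ˢ Set.Icc a₃ b₃) :=
  measurableSet_Icc.prod (measurableSet_Icc.prod measurableSet_Icc)

lemma le_of_eventually_mul_rpow_le {a K α β : ℝ} (ha : 0 < a)
    (h : ∀ᶠ δ in 𝓝[>] 0, a * δ ^ α ≤ K * δ ^ β) : β ≤ α := by
  by_contra! hαβ
  have hlim : Tendsto (fun δ : ℝ => K * δ ^ (β - α)) (𝓝[>] 0) (𝓝 0) := by
    have := ((Real.continuousAt_rpow_const 0 (β - α) (.inr (by linarith))).const_mul K).tendsto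
    simpa [Real.zero_rpow (by linarith : β - α ≠ 0)] using this.mono_left nhdsWithin_le_nhds
  obtain ⟨δ, hle, hδ : 0 < δ, hsmall⟩ := (h.and (eventually_mem_nhdsWithin.and
    (hlim.eventually (gt_mem_nhds ha)))).exists
  rw [← sub_add_cancel β α, Real.rpow_add hδ, ← mul_assoc] at hle
  exact (hle.trans_lt (mul_lt_mul_of_pos_right hsmall (Real.rpow_pos_of_pos hδ α))).false

lemma RWT.mul_add_mul_le_of_test_sets {φ : ℝ × ℝ → ℝ} {R : Set (ℝ × ℝ)} {pinv qinv : ℝ}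
    (h : RWT φ R pinv qinv) {E F : ℝ → Set (ℝ × ℝ × ℝ)} {m e f μ β γ : ℝ}
    (hm : 0 < m) (he : 0 < e) (hf : 0 < f)
    (hEm : ∀ᶠ δ in 𝓝[>] 0, MeasurableSet (E δ)) (hFm : ∀ᶠ δ in 𝓝[>] 0, MeasurableSet (F δ))
    (hE : ∀ᶠ δ in 𝓝[>] 0, volume (E δ) = ENNReal.ofReal (e * δ ^ β))
    (hF : ∀ᶠ δ in 𝓝[>] 0, volume (F δ) = ENNReal.ofReal (f * δ ^ γ))
    (hpair : ∀ᶠ δ in 𝓝[>] 0,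
      ENNReal.ofReal (m * δ ^ μ) * volume (F δ) ≤ pairing φ R (E δ) (F δ)) :
    β * pinv + γ * (1 - qinv) ≤ μ + γ := by
  obtain ⟨C, hC, hCb⟩ := h
  refine le_of_eventually_mul_rpow_le (mul_pos hm hf) (K := C * e ^ pinv * f ^ (1 - qinv)) ?_
  filter_upwards [eventually_mem_nhdsWithin, hEm, hFm, hE, hF, hpair]
    with δ (hδ : 0 < δ) hEδm hFδm hEδ hFδ hpairδ
  have hEδpos : 0 < e * δ ^ β := by positivity
  have hFδpos : 0 < f * δ ^ γ := by positivity
  have key := hpairδ.trans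
    (hCb _ _ hEδm hFδm (hEδ ▸ ENNReal.ofReal_lt_top) (hFδ ▸ ENNReal.ofReal_lt_top))
  rw [hEδ, hFδ, ENNReal.ofReal_rpow_of_pos hEδpos, ENNReal.ofReal_rpow_of_pos hFδpos,
    ← ENNReal.ofReal_mul (by positivity), ← ENNReal.ofReal_mul hC,
    ← ENNReal.ofReal_mul (by positivity), ENNReal.ofReal_le_ofReal_iff (by positivity)] at key
  calc m * f * δ ^ (μ + γ) = m * δ ^ μ * (f * δ ^ γ) := by rw [Real.rpow_add hδ]; ring
    _ ≤ C * (e * δ ^ β) ^ pinv * (f * δ ^ γ) ^ (1 - qinv) := key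
    _ = C * e ^ pinv * f ^ (1 - qinv) * δ ^ (β * pinv + γ * (1 - qinv)) := by
      rw [Real.mul_rpow he.le (by positivity), Real.mul_rpow hf.le (by positivity),
        ← Real.rpow_mul hδ.le, ← Real.rpow_mul hδ.le, Real.rpow_add hδ]
      ring

lemma volume_le_avgOp_indicator {φ : ℝ × ℝ → ℝ} {R B : Set (ℝ × ℝ)} {E : Set (ℝ × ℝ × ℝ)}
    {x : ℝ × ℝ × ℝ} (hB : MeasurableSet B) (hBR : B ⊆ R)
    (hmem : ∀ t ∈ B, (x.1 - t.1, x.2.1 - t.2, x.2.2 - φ t) ∈ E) :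
    volume B ≤ avgOp φ R (E.indicator 1) x := by
  rw [← Measure.restrict_eq_self volume hBR, ← lintegral_indicator_one hB]
  refine lintegral_mono fun t => ?_
  by_cases ht : t ∈ B
  · simp [ht, hmem t ht]
  · simp [ht]

lemma mul_volume_le_pairing {φ : ℝ × ℝ → ℝ} {R : Set (ℝ × ℝ)} {E F : Set (ℝ × ℝ × ℝ)}
    {m : ℝ≥0∞} (hF : MeasurableSet F) (h : ∀ x ∈ F, m ≤ avgOp φ R (E.indicator 1) x) :
    m * volume F ≤ pairing φ R E F := by
  rw [← lintegral_indicator_const hF]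
  refine lintegral_mono fun x => ?_
  by_cases hx : x ∈ F
  · simpa [hx] using h x hx
  · simp [hx]

lemma abs_pow_sub_pow_le_of_abs_le_one {a b : ℝ} (n : ℕ) (ha : |a| ≤ 1) (hb : |b| ≤ 1) :
    |a ^ n - b ^ n| ≤ n * |a - b| := by
  calc |a ^ n - b ^ n| ≤ |a - b| * n * max |a| |b| ^ (n - 1) := abs_pow_sub_pow_le a b n
    _ ≤ |a - b| * n * 1 := by gcongr; exact pow_le_one₀ (by positivity) (max_le ha hb)
    _ = n * |a - b| := by ring

def GraphNearPow (φ : ℝ × ℝ → ℝ) (J A : ℕ) (η κ δ : ℝ) : Prop :=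
  ∀ (t : ℝ × ℝ) (u : ℝ), |t.1| ≤ 1 → 0 ≤ t.2 → t.2 ≤ η * δ → |u| ≤ 1 →
    |u - t.1| ≤ κ * δ ^ A → |φ t - u ^ J| ≤ δ ^ A / 4

lemma exists_graphNearPow {φ : ℝ × ℝ → ℝ} {J A : ℕ} {M : ℝ} (hA : A ≠ 0)
    (hφ : ∀ t ∈ unitSquare, |φ t - t.1 ^ J| ≤ M * |t.2| ^ A) :
    ∃ η κ : ℝ, 0 < η ∧ η ≤ 1 ∧ 0 < κ ∧ κ ≤ 1 ∧
      ∀ δ : ℝ, 0 < δ → δ ≤ 1 → GraphNearPow φ J A η κ δ := by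
  set η : ℝ := (8 * (|M| + 1))⁻¹
  set κ : ℝ := (8 * (J + 1))⁻¹
  have hη : 0 < η := by positivity
  have hκ : 0 < κ := by positivity
  have hη1 : η ≤ 1 := inv_le_one_of_one_le₀ (by linarith [abs_nonneg M])
  have hκ1 : κ ≤ 1 := inv_le_one_of_one_le₀ (by linarith [(Nat.cast_nonneg J : (0:ℝ) ≤ J)])
  have hMη : |M| * η ≤ 1 / 8 := by
    rw [← div_eq_mul_inv, div_le_div_iff₀ (by positivity) (by norm_num)]; linarith
  have hJκ : J * κ ≤ 1 / 8 := by
    rw [← div_eq_mul_inv, div_le_div_iff₀ (by positivity) (by norm_num)]; linarith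
  refine ⟨η, κ, hη, hη1, hκ, hκ1, fun δ hδ hδ1 t u ht1 ht2 ht2η hu hut => ?_⟩
  have htS : t ∈ unitSquare := ⟨⟨by linarith [abs_le.mp ht1], by nlinarith⟩,
    ⟨(abs_le.mp ht1).2, by nlinarith⟩⟩
  have hgraph : |φ t - t.1 ^ J| ≤ δ ^ A / 8 := calc
    |φ t - t.1 ^ J| ≤ |M| * t.2 ^ A := by
      rw [← abs_of_nonneg ht2]; exact (hφ t htS).trans (by gcongr; exact le_abs_self M)
    _ ≤ |M| * (η ^ A * δ ^ A) := by rw [← mul_pow]; gcongr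
    _ ≤ |M| * (η * δ ^ A) := by gcongr; exact pow_le_of_le_one hη.le hη1 hA
    _ ≤ δ ^ A / 8 := by nlinarith [pow_pos hδ A]
  have hpow : |u ^ J - t.1 ^ J| ≤ δ ^ A / 8 := calc
    |u ^ J - t.1 ^ J| ≤ J * |u - t.1| := abs_pow_sub_pow_le_of_abs_le_one J hu ht1
    _ ≤ J * (κ * δ ^ A) := by gcongr
    _ ≤ δ ^ A / 8 := by nlinarith [pow_pos hδ A]
  calc |φ t - u ^ J| = |(φ t - t.1 ^ J) - (u ^ J - t.1 ^ J)| := by ring_nf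
    _ ≤ |φ t - t.1 ^ J| + |u ^ J - t.1 ^ J| := abs_sub _ _
    _ ≤ δ ^ A / 4 := by linarith

lemma exists_abs_eval_sub_pow_le {φp : MvPolynomial (Fin 2) ℝ} {J A : ℕ}
    (h : (X 1 : MvPolynomial (Fin 2) ℝ) ^ A ∣ φp - X 0 ^ J) :
    ∃ M : ℝ, ∀ t ∈ unitSquare, |eval ![t.1, t.2] φp - t.1 ^ J| ≤ M * |t.2| ^ A := by
  obtain ⟨ρ, hρ⟩ := h
  have hcont : Continuous fun t : ℝ × ℝ => eval ![t.1, t.2] ρ :=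
    (MvPolynomial.continuous_eval ρ).comp (by fun_prop)
  obtain ⟨M, hM⟩ := isCompact_Icc.exists_bound_of_continuousOn hcont.continuousOn
  refine ⟨M, fun t ht => ?_⟩
  have hfactor : eval ![t.1, t.2] φp - t.1 ^ J = t.2 ^ A * eval ![t.1, t.2] ρ := by
    simpa using congrArg (eval ![t.1, t.2]) hρ
  rw [hfactor, abs_mul, abs_pow, mul_comm]
  gcongr
  exact hM t ht

section TestSets

variable {φ : ℝ × ℝ → ℝ} {J A : ℕ} {M pinv qinv η κ δ : ℝ}

/- For `x ∈ F` we have `x₁ ≈ 1` and `φ t ≈ t₁^J`, so the points `x - (t, φ t)` lie near the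
curve `{(y, x₃ - (1 - y)^J)}`. -/
lemma ofReal_mul_volume_le_pairing_slab_box (hδ : 0 < δ) (hδ1 : δ ≤ 1) (hη1 : η ≤ 1)
    (hκδ : κ * δ ^ A ≤ 1)
    (hnear : GraphNearPow φ J A η κ δ) :
    ENNReal.ofReal (η * δ) *
        volume (Set.Icc 1 (1 + κ * δ ^ A) ×ˢ Set.Icc 0 (η * δ) ×ˢ
          Set.Icc (δ ^ A / 4) (3 * δ ^ A / 4)) ≤
      pairing φ unitSquare
        (shear (fun y => -(1 - y) ^ J) ⁻¹' (Set.Icc (-1) 2 ×ˢ Set.Icc (-δ) δ ×ˢ Set.Icc 0 (δ ^ A)))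
        (Set.Icc 1 (1 + κ * δ ^ A) ×ˢ Set.Icc 0 (η * δ) ×ˢ
          Set.Icc (δ ^ A / 4) (3 * δ ^ A / 4)) := by
  refine mul_volume_le_pairing (measurableSet_Icc_prod_Icc_prod_Icc ..) fun x hx => ?_
  obtain ⟨⟨hx₁, hx₁'⟩, ⟨hx₂, hx₂'⟩, hx₃, hx₃'⟩ := hx
  have hB := volume_Icc_prod_real ((0 : ℝ), (0 : ℝ)) (1, η * δ)
  simp only [sub_zero, ENNReal.ofReal_one, one_mul] at hB
  refine hB ▸ volume_le_avgOp_indicator measurableSet_Icc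
    (Set.Icc_subset_Icc (by norm_num) (Prod.mk_le_mk.2 ⟨le_rfl, by nlinarith⟩)) fun t ht => ?_
  obtain ⟨⟨ht₁, ht₂⟩, ht₁', ht₂'⟩ := ht
  obtain ⟨hlo, hhi⟩ := abs_le.1 <| hnear t (1 - (x.1 - t.1)) (abs_le.2 ⟨by linarith, ht₁'⟩) ht₂
    ht₂' (abs_le.2 ⟨by linarith, by linarith⟩) (abs_le.2 ⟨by linarith, by linarith⟩)
  simp only [shear, Set.mem_preimage, Set.mem_prod, Set.mem_Icc]
  refine ⟨⟨by linarith, by linarith⟩, ⟨by nlinarith, by nlinarith⟩, by linarith, by linarith⟩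

lemma ofReal_mul_volume_le_pairing_box_slab (hδ : 0 < δ) (hδ1 : δ ≤ 1) (hη1 : η ≤ 1)
    (hκ : 0 < κ) (hκδ : κ * δ ^ A ≤ 1)
    (hnear : GraphNearPow φ J A η κ δ) :
    ENNReal.ofReal (κ * δ ^ A * (η * δ / 2)) *
        volume (shear (· ^ J) ⁻¹' (Set.Icc 0 1 ×ˢ Set.Icc (η * δ / 2) (η * δ) ×ˢ
          Set.Icc (δ ^ A / 4) (3 * δ ^ A / 4))) ≤
      pairing φ unitSquare (Set.Icc 0 (κ * δ ^ A) ×ˢ Set.Icc 0 (η * δ) ×ˢ Set.Icc 0 (δ ^ A))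
        (shear (· ^ J) ⁻¹' (Set.Icc 0 1 ×ˢ Set.Icc (η * δ / 2) (η * δ) ×ˢ
          Set.Icc (δ ^ A / 4) (3 * δ ^ A / 4))) := by
  refine mul_volume_le_pairing ((measurePreserving_shear (by fun_prop)).measurable
    (measurableSet_Icc_prod_Icc_prod_Icc ..)) fun x hx => ?_
  simp only [shear, Set.mem_preimage, Set.mem_prod, Set.mem_Icc] at hx
  obtain ⟨⟨hx₁, hx₁'⟩, ⟨hx₂, hx₂'⟩, hx₃, hx₃'⟩ := hx
  have hB := volume_Icc_prod_real (x.1 - κ * δ ^ A, x.2.1 - η * δ / 2) (x.1, x.2.1)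
  rw [sub_sub_cancel, sub_sub_cancel, ← ENNReal.ofReal_mul (by positivity)] at hB
  refine hB ▸ volume_le_avgOp_indicator measurableSet_Icc
    (Set.Icc_subset_Icc (Prod.mk_le_mk.2 ⟨by linarith, by nlinarith⟩)
      (Prod.mk_le_mk.2 ⟨hx₁', by nlinarith⟩)) fun t ht => ?_
  simp only [Set.mem_Icc, Prod.le_def] at ht
  obtain ⟨⟨ht₁, ht₂⟩, ht₁', ht₂'⟩ := ht
  obtain ⟨hlo, hhi⟩ := abs_le.1 <| hnear t x.1 (abs_le.2 ⟨by linarith, by linarith⟩)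
    (by linarith) (by linarith) (abs_le.2 ⟨by linarith, hx₁'⟩)
    (abs_le.2 ⟨by linarith, by linarith⟩)
  simp only [Set.mem_prod, Set.mem_Icc]
  refine ⟨⟨by linarith, by linarith⟩, ⟨by linarith, by linarith⟩, by linarith, by linarith⟩

lemma RWT.slab_box_exponent_le (hA : A ≠ 0)
    (hφ : ∀ t ∈ unitSquare, |φ t - t.1 ^ J| ≤ M * |t.2| ^ A) (h : RWT φ unitSquare pinv qinv) :
    (A + 1) * pinv + (2 * A + 1) * (1 - qinv) ≤ 2 * A + 2 := by
  obtain ⟨η, κ, hη, hη1, hκ, hκ1, hnear⟩ := exists_graphNearPow hA hφ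
  have hg : Measurable fun y : ℝ => -(1 - y) ^ J := by fun_prop
  have hsmall : ∀ᶠ δ in 𝓝[>] (0 : ℝ), 0 < δ ∧ δ ≤ 1 := Ioc_mem_nhdsGT one_pos
  have key := h.mul_add_mul_le_of_test_sets (m := η) (e := 6) (f := κ * η / 2) (μ := 1)
    (β := (A + 1 : ℕ)) (γ := (2 * A + 1 : ℕ)) hη (by norm_num) (by positivity)
    (.of_forall fun δ => (measurePreserving_shear hg).measurable
      (measurableSet_Icc_prod_Icc_prod_Icc ..))
    (.of_forall fun δ => measurableSet_Icc_prod_Icc_prod_Icc ..) ?_ ?_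
    (hsmall.mono fun δ ⟨hδ, hδ1⟩ => by
      rw [Real.rpow_one]
      exact ofReal_mul_volume_le_pairing_slab_box hδ hδ1 hη1
        (by nlinarith [pow_le_one₀ hδ.le hδ1 (n := A)]) (hnear δ hδ hδ1))
  · push_cast at key; linarith
  · filter_upwards [hsmall] with δ ⟨hδ, _⟩
    rw [(measurePreserving_shear hg).measure_preimage
      (measurableSet_Icc_prod_Icc_prod_Icc ..).nullMeasurableSet,
      volume_Icc_prod_Icc_prod_Icc _ _ (by norm_num) (by linarith), Real.rpow_natCast]
    congr 1; ring
  · filter_upwards [hsmall] with δ ⟨hδ, _⟩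
    rw [volume_Icc_prod_Icc_prod_Icc _ _ (by simp; positivity) (by positivity),
      Real.rpow_natCast]
    congr 1; ring

lemma RWT.box_slab_exponent_le (hA : A ≠ 0)
    (hφ : ∀ t ∈ unitSquare, |φ t - t.1 ^ J| ≤ M * |t.2| ^ A) (h : RWT φ unitSquare pinv qinv) :
    (2 * A + 1) * pinv + (A + 1) * (1 - qinv) ≤ 2 * A + 2 := by
  obtain ⟨η, κ, hη, hη1, hκ, hκ1, hnear⟩ := exists_graphNearPow hA hφ
  have hg : Measurable fun y : ℝ => y ^ J := by fun_prop
  have hsmall : ∀ᶠ δ in 𝓝[>] (0 : ℝ), 0 < δ ∧ δ ≤ 1 := Ioc_mem_nhdsGT one_pos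
  have key := h.mul_add_mul_le_of_test_sets (m := κ * η / 2) (e := κ * η) (f := η / 4)
    (μ := (A + 1 : ℕ)) (β := (2 * A + 1 : ℕ)) (γ := (A + 1 : ℕ))
    (by positivity) (by positivity) (by positivity)
    (.of_forall fun δ => measurableSet_Icc_prod_Icc_prod_Icc ..)
    (.of_forall fun δ => (measurePreserving_shear hg).measurable
      (measurableSet_Icc_prod_Icc_prod_Icc ..)) ?_ ?_
    (hsmall.mono fun δ ⟨hδ, hδ1⟩ => by
      rw [Real.rpow_natCast, show κ * η / 2 * δ ^ (A + 1) = κ * δ ^ A * (η * δ / 2) by ring]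
      exact ofReal_mul_volume_le_pairing_box_slab hδ hδ1 hη1 hκ
        (by nlinarith [pow_le_one₀ hδ.le hδ1 (n := A)]) (hnear δ hδ hδ1))
  · push_cast at key; linarith
  · filter_upwards [hsmall] with δ ⟨hδ, _⟩
    rw [volume_Icc_prod_Icc_prod_Icc _ _ (by positivity) (by positivity), Real.rpow_natCast]
    congr 1; ring
  · filter_upwards [hsmall] with δ ⟨hδ, _⟩
    rw [(measurePreserving_shear hg).measure_preimage
      (measurableSet_Icc_prod_Icc_prod_Icc ..).nullMeasurableSet,
      volume_Icc_prod_Icc_prod_Icc _ _ (by norm_num) (by linarith [mul_pos hη hδ]),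
      Real.rpow_natCast]
    congr 1; ring

end TestSets

theorem stmt_14_general (φp : MvPolynomial (Fin 2) ℝ) (J K A : ℕ) (hA : 2 ≤ A)
    (c : ℝ)
    (hdvd : (X 1 : MvPolynomial (Fin 2) ℝ) ^ (A + 1) ∣
      φp - X 0 ^ J - C c * X 0 ^ K * X 1 ^ A)
    (pinv qinv : ℝ)
    (hrwt : RWT (fun t => eval ![t.1, t.2] φp) unitSquare pinv qinv) :
    ((A : ℝ) + 1) / (2 * (A : ℝ) + 1) * pinv - 1 / (2 * (A : ℝ) + 1) ≤ qinv ∧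
    (2 * (A : ℝ) + 1) / ((A : ℝ) + 1) * pinv - 1 ≤ qinv := by
  have hdvdA : (X 1 : MvPolynomial (Fin 2) ℝ) ^ A ∣ φp - X 0 ^ J := by
    have := ((pow_dvd_pow _ A.le_succ).trans hdvd).add (dvd_mul_left _ (C c * X 0 ^ K))
    rwa [sub_add_cancel] at this
  obtain ⟨M, hM⟩ := exists_abs_eval_sub_pow_le hdvdA
  have hA0 : A ≠ 0 := by omega
  have h₁ := hrwt.slab_box_exponent_le hA0 hM
  have h₂ := hrwt.box_slab_exponent_le hA0 hM
  constructor
  · rw [div_mul_eq_mul_div, div_sub_div_same, div_le_iff₀ (by positivity)]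
    linarith
  · rw [div_mul_eq_mul_div, sub_le_iff_le_add, div_le_iff₀ (by positivity)]
    linarith

/-- If `φ − z₁^J − c z₁^K z₂^A` is divisible by `z₂^{A+1}` (J ≥ 1, K ≥ 0, A ≥ 2, c ≠ 0)
and `T = T_{[−1,1]²}` is of restricted weak type `(p,q)`, then
`1/q ≥ ((A+1)/(2A+1))(1/p) − 1/(2A+1)` and (by duality) `1/q ≥ ((2A+1)/(A+1))(1/p) − 1`. -/
theorem stmt_14 (φp : MvPolynomial (Fin 2) ℝ) (J K A : ℕ) (hJ : 1 ≤ J) (hA : 2 ≤ A)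
    (c : ℝ) (hc : c ≠ 0)
    (hdvd : (X 1 : MvPolynomial (Fin 2) ℝ) ^ (A + 1) ∣
      φp - X 0 ^ J - C c * X 0 ^ K * X 1 ^ A)
    (pinv qinv : ℝ) (hp0 : 0 ≤ pinv) (hp1 : pinv ≤ 1) (hq0 : 0 ≤ qinv) (hq1 : qinv ≤ 1)
    (hrwt : RWT (fun t => eval ![t.1, t.2] φp) unitSquare pinv qinv) :
    ((A : ℝ) + 1) / (2 * (A : ℝ) + 1) * pinv - 1 / (2 * (A : ℝ) + 1) ≤ qinv ∧
    (2 * (A : ℝ) + 1) / ((A : ℝ) + 1) * pinv - 1 ≤ qinv :=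
  stmt_14_general φp J K A hA c hdvd pinv qinv hrwt
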